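/- Let r ≥ 1 be an integer and let G be a connected subcubic simple graph containing at least one vertex of degree 3. Then there is a locally injective homomorphism from G to the complete graph K_4 if and only if there is a locally injective homomorphism from the r-subdivision G^r to the r-subdivision K_4^r. -/

import Mathlib

/-- Representatives of internal vertices of the `k`-subdivision of `G`:
a dart `d` of `G` together with a position `i : Fin k`; the pair `(d, i)` is
identified with `(d.symm, k - 1 - i)`. -/
def SubdivRep {V : Type*} (G : SimpleGraph V) (k : ℕ) :
    G.Dart × Fin k → G.Dart × Fin k → Prop :=
  fun a b => b.1 = a.1.symm ∧ (b.2 : ℕ) = k - 1 - (a.2 : ℕ)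

/-- Internal vertices of the `k`-subdivision of `G`. -/
abbrev SubdivInternal {V : Type*} (G : SimpleGraph V) (k : ℕ) :=
  Quot (SubdivRep G k)

/-- Vertices of the `k`-subdivision of `G`: the branch vertices (`Sum.inl`)
are the original vertices of `G`, and `Sum.inr` are the internal vertices. -/
abbrev SubdivVertex {V : Type*} (G : SimpleGraph V) (k : ℕ) :=
  V ⊕ SubdivInternal G k

/-- One-directional adjacency for the `k`-subdivision: a branch vertex `u` is
adjacent to the first internal vertex of any edge of `G` leaving `u` (via the
identification, also to the last internal vertex of any edge entering `u`),
and consecutive internal vertices on a subdivided edge are adjacent. -/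
def SubdivAdjBase {V : Type*} (G : SimpleGraph V) (k : ℕ) :
    SubdivVertex G k → SubdivVertex G k → Prop
  | Sum.inl u, Sum.inr x =>
      ∃ (d : G.Dart) (i : Fin k), (i : ℕ) = 0 ∧ d.toProd.1 = u ∧
        x = Quot.mk (SubdivRep G k) (d, i)
  | Sum.inr x, Sum.inr y =>
      ∃ (d : G.Dart) (i j : Fin k), (j : ℕ) = (i : ℕ) + 1 ∧
        x = Quot.mk (SubdivRep G k) (d, i) ∧ y = Quot.mk (SubdivRep G k) (d, j)
  | _, _ => False

/-- The `k`-subdivision of a simple graph `G`: every edge `uv` of `G` is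
replaced by a path from `u` to `v` through `k` new internal vertices. -/
def Subdivision {V : Type*} (G : SimpleGraph V) (k : ℕ) :
    SimpleGraph (SubdivVertex G k) where
  Adj x y := x ≠ y ∧ (SubdivAdjBase G k x y ∨ SubdivAdjBase G k y x)
  symm := ⟨fun x y h => ⟨Ne.symm h.1, h.2.symm⟩⟩
  loopless := ⟨fun x h => h.1 rfl⟩

/-- A homomorphism `f : G →g H` is locally bijective if for every vertex `u`
the restriction of `f` to the open neighbourhood of `u`, viewed as a map into
the open neighbourhood of `f u`, is a bijection. -/
def GraphHomLocallyBijective {V W : Type*} {G : SimpleGraph V} {H : SimpleGraph W}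
    (f : G →g H) : Prop :=
  ∀ u : V, Set.BijOn f (G.neighborSet u) (H.neighborSet (f u))

/-- A homomorphism `f : G →g H` is locally surjective if for every vertex `u`
the restriction of `f` to the open neighbourhood of `u`, viewed as a map into
the open neighbourhood of `f u`, is surjective. -/
def GraphHomLocallySurjective {V W : Type*} {G : SimpleGraph V} {H : SimpleGraph W}
    (f : G →g H) : Prop :=
  ∀ u : V, Set.SurjOn f (G.neighborSet u) (H.neighborSet (f u))

/-- A homomorphism `f : G →g H` is locally injective if for every vertex `u`
the restriction of `f` to the open neighbourhood of `u`, viewed as a map into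
the open neighbourhood of `f u`, is injective. -/
def GraphHomLocallyInjective {V W : Type*} {G : SimpleGraph V} {H : SimpleGraph W}
    (f : G →g H) : Prop :=
  ∀ u : V, Set.InjOn f (G.neighborSet u)

/-!
Internal vertices of a subdivision have exactly two neighbours, so a locally injective
`F : G^k →g H^k` sends a vertex of degree three to a branch vertex. Local injectivity then forces
`F` to map the subdivided path of every edge leaving a branch vertex onto a subdivided path of `H`,
so by connectivity all branch vertices go to branch vertices and `F` restricts to a locally
injective homomorphism `G →g H`. Conversely, a locally injective `f : G →g H` extends edge by edge
to `G^k →g H^k`.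
-/

namespace Subdivision

open SimpleGraph

variable {V W : Type*} {G : SimpleGraph V} {H : SimpleGraph W} {k : ℕ}

-- `SubdivRep` is symmetric and its square is the identity, so its equivalence closure only adds
-- the diagonal.
lemma eq_or_subdivRep_of_eqvGen {a b : G.Dart × Fin k}
    (h : Relation.EqvGen (SubdivRep G k) a b) : a = b ∨ SubdivRep G k a b := by
  induction h with
  | rel _ _ hxy => exact Or.inr hxy
  | refl _ => exact Or.inl rfl
  | symm x _ _ ih =>
    rcases ih with rfl | ⟨h₁, h₂⟩
    · exact Or.inl rfl
    · exact Or.inr ⟨by rw [h₁, Dart.symm_symm], by have := x.2.isLt; omega⟩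
  | trans x _ _ _ _ ih₁ ih₂ =>
    rcases ih₁ with rfl | ⟨h₁, h₂⟩
    · exact ih₂
    rcases ih₂ with rfl | ⟨h₃, h₄⟩
    · exact Or.inr ⟨h₁, h₂⟩
    · exact Or.inl (Prod.ext (by rw [h₃, h₁, Dart.symm_symm])
        (Fin.ext (by have := x.2.isLt; omega)))

lemma mk_eq_mk_iff {d e : G.Dart} {i j : Fin k} :
    Quot.mk (SubdivRep G k) (d, i) = Quot.mk (SubdivRep G k) (e, j) ↔
      (e = d ∧ (j : ℕ) = i) ∨ (e = d.symm ∧ (j : ℕ) = k - 1 - i) := by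
  constructor
  · intro h
    rcases eq_or_subdivRep_of_eqvGen (Quot.eq.mp h) with h | ⟨h₁, h₂⟩
    · simp only [Prod.mk.injEq] at h
      exact Or.inl ⟨h.1.symm, congrArg Fin.val h.2.symm⟩
    · exact Or.inr ⟨h₁, h₂⟩
  · rintro (⟨rfl, h⟩ | ⟨rfl, h⟩)
    · rw [Fin.ext h]
    · exact Quot.sound ⟨rfl, h⟩

/-- Vertex number `n` on the path `d.fst, …, d.snd` of `G^k` subdividing the dart `d`;
the junk value for `n > k + 1` is `d.snd`. -/
def pathVertex (d : G.Dart) (n : ℕ) : SubdivVertex G k :=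
  if h₀ : n = 0 then Sum.inl d.fst
  else if h : n ≤ k then Sum.inr (Quot.mk _ (d, ⟨n - 1, by omega⟩))
  else Sum.inl d.snd

@[simp]
lemma pathVertex_zero (d : G.Dart) : pathVertex (k := k) d 0 = Sum.inl d.fst := rfl

lemma pathVertex_succ_of_lt (d : G.Dart) {n : ℕ} (hn : n < k) :
    pathVertex d (n + 1) = Sum.inr (Quot.mk _ (d, ⟨n, hn⟩)) := by
  simp [pathVertex, Nat.succ_le_of_lt hn]

@[simp]
lemma pathVertex_succ_self (d : G.Dart) : pathVertex (k := k) d (k + 1) = Sum.inl d.snd := by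
  simp [pathVertex]

lemma pathVertex_symm (d : G.Dart) {n : ℕ} (hn : n ≤ k + 1) :
    pathVertex (k := k) d.symm n = pathVertex d (k + 1 - n) := by
  rcases n with _ | n
  · simp [Dart.symm]
  rcases Nat.lt_or_ge n k with hnk | hnk
  · rw [pathVertex_succ_of_lt _ hnk, show k + 1 - (n + 1) = k - n - 1 + 1 by omega,
      pathVertex_succ_of_lt _ (by omega)]
    exact congrArg Sum.inr (Quot.sound ⟨(Dart.symm_symm d).symm, by simp only; omega⟩)
  · obtain rfl : n = k := by omega
    simp [Dart.symm]

lemma pathVertex_injOn (d : G.Dart) : Set.InjOn (pathVertex (k := k) d) (Set.Iic (k + 1)) := by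
  intro n hn m hm h
  simp only [Set.mem_Iic] at hn hm
  have hfs := d.fst_ne_snd
  have hsymm := (Dart.symm_ne d).symm
  unfold pathVertex at h
  split_ifs at h <;> simp_all [mk_eq_mk_iff, eq_comm (a := d.snd)] <;> omega

lemma exists_pathVertex_eq (x : SubdivInternal G k) :
    ∃ (d : G.Dart) (n : ℕ), n < k ∧ Sum.inr x = pathVertex d (n + 1) := by
  obtain ⟨⟨d, i⟩, rfl⟩ := Quot.exists_rep x
  exact ⟨d, i, i.isLt, (pathVertex_succ_of_lt d i.isLt).symm⟩

lemma adj_pathVertex_succ (hk : 0 < k) (d : G.Dart) {n : ℕ} (hn : n ≤ k) :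
    (Subdivision G k).Adj (pathVertex d n) (pathVertex d (n + 1)) := by
  refine ⟨fun h => by simpa using pathVertex_injOn d (by simp; omega) (by simp; omega) h, ?_⟩
  rcases n with _ | n
  · rw [zero_add, pathVertex_succ_of_lt d hk]
    exact Or.inl ⟨d, ⟨0, hk⟩, rfl, rfl, rfl⟩
  rcases Nat.lt_or_ge (n + 1) k with hnk | hnk
  · rw [pathVertex_succ_of_lt d (by omega), pathVertex_succ_of_lt d hnk]
    exact Or.inl ⟨d, _, _, rfl, rfl, rfl⟩
  · obtain rfl : n + 1 = k := by omega
    rw [pathVertex_succ_of_lt d (by omega), pathVertex_succ_self]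
    exact Or.inr ⟨d.symm, ⟨0, hk⟩, rfl, rfl, Quot.sound ⟨rfl, by simp only; omega⟩⟩

lemma exists_pathVertex_of_subdivAdjBase {x y : SubdivVertex G k} (h : SubdivAdjBase G k x y) :
    ∃ (d : G.Dart) (n : ℕ), n < k ∧ x = pathVertex d n ∧ y = pathVertex d (n + 1) := by
  rcases x with u | x <;> rcases y with v | y
  · exact h.elim
  · obtain ⟨d, i, hi, rfl, rfl⟩ := h
    exact ⟨d, 0, i.pos, rfl, by rw [pathVertex_succ_of_lt d i.pos, ← (Fin.ext hi : i = ⟨0, _⟩)]⟩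
  · exact h.elim
  · obtain ⟨d, i, j, hij, rfl, rfl⟩ := h
    have hi : (i : ℕ) + 1 < k := hij ▸ j.isLt
    exact ⟨d, i + 1, hi, (pathVertex_succ_of_lt d i.isLt).symm,
      by rw [pathVertex_succ_of_lt d hi, ← (Fin.ext hij : j = ⟨i + 1, hi⟩)]⟩

lemma pos_of_adj {x y : SubdivVertex G k} (h : (Subdivision G k).Adj x y) : 0 < k := by
  rcases h.2 with h | h <;>
  · obtain ⟨-, n, hn, -⟩ := exists_pathVertex_of_subdivAdjBase h
    omega

lemma exists_pathVertex_of_adj {x y : SubdivVertex G k} (h : (Subdivision G k).Adj x y) :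
    ∃ (d : G.Dart) (n : ℕ), n ≤ k ∧ x = pathVertex d n ∧ y = pathVertex d (n + 1) := by
  rcases h.2 with h | h
  · obtain ⟨d, n, hn, rfl, rfl⟩ := exists_pathVertex_of_subdivAdjBase h
    exact ⟨d, n, hn.le, rfl, rfl⟩
  · obtain ⟨d, n, hn, rfl, rfl⟩ := exists_pathVertex_of_subdivAdjBase h
    refine ⟨d.symm, k - n, by omega, ?_, ?_⟩ <;>
      rw [pathVertex_symm d (by omega)] <;> congr 1 <;> omega

lemma pathVertex_succ_eq_pathVertex_succ_iff {d e : G.Dart} {n m : ℕ} (hn : n < k) (hm : m < k) :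
    pathVertex (k := k) d (n + 1) = pathVertex e (m + 1) ↔
      (e = d ∧ m = n) ∨ (e = d.symm ∧ m = k - 1 - n) := by
  rw [pathVertex_succ_of_lt d hn, pathVertex_succ_of_lt e hm, Sum.inr_injective.eq_iff,
    mk_eq_mk_iff]

lemma eq_pathVertex_or_eq_pathVertex_of_adj {d : G.Dart} {n : ℕ} (hn : n < k)
    {y : SubdivVertex G k} (h : (Subdivision G k).Adj (pathVertex d (n + 1)) y) :
    y = pathVertex d n ∨ y = pathVertex d (n + 2) := by
  obtain ⟨e, m, hm, hx, rfl⟩ := exists_pathVertex_of_adj h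
  rcases m with _ | m
  · rw [pathVertex_succ_of_lt d hn] at hx
    exact (Sum.inr_ne_inl hx).elim
  rcases (pathVertex_succ_eq_pathVertex_succ_iff hn (by omega)).mp hx with ⟨rfl, rfl⟩ | ⟨rfl, rfl⟩
  · exact Or.inr rfl
  · left
    rw [pathVertex_symm d (by omega)]
    congr 1
    omega

lemma exists_eq_pathVertex_one_of_adj {u : V} {y : SubdivVertex G k}
    (h : (Subdivision G k).Adj (Sum.inl u) y) : ∃ d : G.Dart, d.fst = u ∧ y = pathVertex d 1 := by
  obtain ⟨d, m, hm, hx, rfl⟩ := exists_pathVertex_of_adj h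
  rcases m with _ | m
  · exact ⟨d, (Sum.inl_injective hx).symm, rfl⟩
  · rw [pathVertex_succ_of_lt d (by omega)] at hx
    exact (Sum.inl_ne_inr hx).elim

lemma eq_of_pathVertex_one_eq (hk : 0 < k) {d e : G.Dart} (hfst : d.fst = e.fst)
    (h : pathVertex (k := k) d 1 = pathVertex e 1) : d = e := by
  rcases (pathVertex_succ_eq_pathVertex_succ_iff hk hk).mp h with ⟨rfl, -⟩ | ⟨rfl, -⟩
  · rfl
  · exact (d.fst_ne_snd hfst).elim

def mapVertex (f : G →g H) : SubdivVertex G k → SubdivVertex H k :=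
  Sum.map f (Quot.map (fun p => (f.mapDart p.1, p.2)) fun _ _ h =>
    ⟨by rw [h.1]; rfl, h.2⟩)

lemma mapVertex_pathVertex (f : G →g H) (d : G.Dart) (n : ℕ) :
    mapVertex (k := k) f (pathVertex d n) = pathVertex (f.mapDart d) n := by
  unfold pathVertex
  split_ifs <;> rfl

def map (f : G →g H) : Subdivision G k →g Subdivision H k where
  toFun := mapVertex f
  map_rel' h := by
    obtain ⟨d, n, hn, rfl, rfl⟩ := exists_pathVertex_of_adj h
    rw [mapVertex_pathVertex, mapVertex_pathVertex]
    exact adj_pathVertex_succ (pos_of_adj h) _ hn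

lemma map_pathVertex (f : G →g H) (d : G.Dart) (n : ℕ) :
    map (k := k) f (pathVertex d n) = pathVertex (f.mapDart d) n :=
  mapVertex_pathVertex f d n

lemma graphHomLocallyInjective_map {f : G →g H} (hf : GraphHomLocallyInjective f) :
    GraphHomLocallyInjective (map (k := k) f) := by
  rintro (u | x) a ha b hb hab
  · have hk := pos_of_adj ha
    obtain ⟨d, rfl, rfl⟩ := exists_eq_pathVertex_one_of_adj ha
    obtain ⟨e, he, rfl⟩ := exists_eq_pathVertex_one_of_adj hb
    rw [map_pathVertex, map_pathVertex] at hab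
    have hde := eq_of_pathVertex_one_eq hk (by simp [he]) hab
    have hsnd : d.snd = e.snd :=
      hf d.fst d.adj (he ▸ e.adj) (congrArg (fun d => d.snd) hde)
    rw [Dart.ext _ _ (Prod.ext he.symm hsnd)]
  · obtain ⟨d, n, hn, hx⟩ := exists_pathVertex_eq x
    rw [hx] at ha hb
    have hne : map f (pathVertex (k := k) d n) ≠ map f (pathVertex d (n + 2)) := by
      rw [map_pathVertex, map_pathVertex]
      exact fun h => by simpa using pathVertex_injOn _ (by simp; omega) (by simp; omega) h
    rcases eq_pathVertex_or_eq_pathVertex_of_adj hn ha with rfl | rfl <;>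
      rcases eq_pathVertex_or_eq_pathVertex_of_adj hn hb with rfl | rfl
    exacts [rfl, (hne hab).elim, (hne hab.symm).elim, rfl]

section LocallyInjective

variable {F : Subdivision G k →g Subdivision H k}

/-- The image of the vertex after an internal one is forced: the other neighbour of the image
of the internal vertex is already the image of the previous vertex. -/
lemma apply_pathVertex_eq (hF : GraphHomLocallyInjective F) {d : G.Dart} {e : H.Dart}
    (h₀ : F (pathVertex d 0) = pathVertex e 0) (h₁ : F (pathVertex d 1) = pathVertex e 1) :
    ∀ n ≤ k + 1, F (pathVertex d n) = pathVertex e n := by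
  suffices h : ∀ n < k + 1, F (pathVertex d n) = pathVertex e n ∧
      F (pathVertex d (n + 1)) = pathVertex e (n + 1) by
    rintro (_ | n) hn
    exacts [h₀, (h n hn).2]
  intro n
  induction n with
  | zero => exact fun _ => ⟨h₀, h₁⟩
  | succ n ih =>
    intro hn
    obtain ⟨hprev, hcur⟩ := ih (by omega)
    refine ⟨hcur, ?_⟩
    have hnext := adj_pathVertex_succ (k := k) (by omega) d (n := n + 1) (by omega)
    have himage := F.map_adj hnext
    rw [hcur] at himage
    refine (eq_pathVertex_or_eq_pathVertex_of_adj (by omega) himage).resolve_left fun h => ?_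
    have hmem : pathVertex d n ∈ (Subdivision G k).neighborSet (pathVertex d (n + 1)) :=
      (adj_pathVertex_succ (by omega) d (by omega)).symm
    have := pathVertex_injOn d (by simp; omega) (by simp; omega)
      (hF _ hnext hmem (h.trans hprev.symm))
    omega

lemma exists_dart_apply_pathVertex_eq (hF : GraphHomLocallyInjective F) (hk : 0 < k)
    {d : G.Dart} {b : W} (hb : F (Sum.inl d.fst) = Sum.inl b) :
    ∃ e : H.Dart, e.fst = b ∧ ∀ n ≤ k + 1, F (pathVertex d n) = pathVertex e n := by
  have himage := F.map_adj (adj_pathVertex_succ hk d (Nat.zero_le k))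
  rw [pathVertex_zero, hb] at himage
  obtain ⟨e, rfl, he⟩ := exists_eq_pathVertex_one_of_adj himage
  exact ⟨e, rfl, apply_pathVertex_eq hF hb he⟩

/-- Internal vertices of `H^k` have only two neighbours. -/
lemma exists_apply_inl_eq_inl (hF : GraphHomLocallyInjective F) (hk : 0 < k) {v u₁ u₂ u₃ : V}
    (h₁ : G.Adj v u₁) (h₂ : G.Adj v u₂) (h₃ : G.Adj v u₃) (h₁₂ : u₁ ≠ u₂) (h₁₃ : u₁ ≠ u₃)
    (h₂₃ : u₂ ≠ u₃) : ∃ b, F (Sum.inl v) = Sum.inl b := by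
  rcases hv : F (Sum.inl v) with b | x
  · exact ⟨b, rfl⟩
  exfalso
  obtain ⟨d, n, hn, hx⟩ := exists_pathVertex_eq x
  let a : ∀ {u}, G.Adj v u → SubdivVertex G k := fun h => pathVertex ⟨(v, _), h⟩ 1
  have ha : ∀ {u} (h : G.Adj v u), (Subdivision G k).Adj (Sum.inl v) (a h) := fun h =>
    adj_pathVertex_succ hk ⟨(v, _), h⟩ (Nat.zero_le k)
  have ha_inj : ∀ {u u'} (h : G.Adj v u) (h' : G.Adj v u'), u ≠ u' → a h ≠ a h' :=
    fun h h' hne heq => hne (congrArg (fun d : G.Dart => d.snd)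
      (eq_of_pathVertex_one_eq (d := ⟨(v, _), h⟩) (e := ⟨(v, _), h'⟩) hk rfl heq))
  have hmaps : ∀ y ∈ ({a h₁, a h₂, a h₃} : Set _),
      F y ∈ ({pathVertex d n, pathVertex d (n + 2)} : Set _) := by
    rintro y (rfl | rfl | rfl) <;>
    · refine eq_pathVertex_or_eq_pathVertex_of_adj hn ?_
      rw [← hx, ← hv]
      exact F.map_adj (ha _)
  have hcard := Set.ncard_le_ncard_of_injOn F hmaps
    ((hF (Sum.inl v)).mono (by rintro y (rfl | rfl | rfl) <;> exact ha _)) (Set.toFinite _)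
  rw [Set.ncard_eq_three.mpr ⟨_, _, _, ha_inj h₁ h₂ h₁₂, ha_inj h₁ h₃ h₁₃, ha_inj h₂ h₃ h₂₃, rfl⟩]
    at hcard
  have hpair := Set.ncard_insert_le (pathVertex (k := k) d n) {pathVertex d (n + 2)}
  rw [Set.ncard_singleton] at hpair
  omega

lemma forall_exists_apply_inl_eq_inl (hF : GraphHomLocallyInjective F) (hk : 0 < k)
    (hconn : G.Connected) {v : V} {b : W} (hv : F (Sum.inl v) = Sum.inl b) :
    ∀ u, ∃ b', F (Sum.inl u) = Sum.inl b' := by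
  intro u
  induction (reachable_iff_reflTransGen v u).mp (hconn v u) with
  | refl => exact ⟨b, hv⟩
  | tail _ hadj ih =>
    obtain ⟨b', hb'⟩ := ih
    obtain ⟨e, -, he⟩ := exists_dart_apply_pathVertex_eq hF hk (d := ⟨(_, _), hadj⟩) hb'
    exact ⟨e.snd, by simpa using he (k + 1) le_rfl⟩

lemma exists_graphHomLocallyInjective (hF : GraphHomLocallyInjective F) (hk : 0 < k)
    (hbranch : ∀ u, ∃ b, F (Sum.inl u) = Sum.inl b) :
    ∃ f : G →g H, GraphHomLocallyInjective f := by
  choose g hg using hbranch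
  choose e he_fst he using fun d : G.Dart => exists_dart_apply_pathVertex_eq hF hk (hg d.fst)
  have he_snd : ∀ d, (e d).snd = g d.snd := fun d => by
    simpa [hg] using (he d (k + 1) le_rfl).symm
  refine ⟨⟨g, fun {u v} huv => ?_⟩, fun u v₁ h₁ v₂ h₂ hv => ?_⟩
  · simpa [he_fst, he_snd] using (e ⟨(u, v), huv⟩).adj
  · have he_eq : e ⟨(u, v₁), h₁⟩ = e ⟨(u, v₂), h₂⟩ :=
      Dart.ext _ _ (Prod.ext (by simp [he_fst]) (by simpa [he_snd] using hv))
    have hpath := he ⟨(u, v₁), h₁⟩ 1 (by omega)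
    rw [he_eq, ← he ⟨(u, v₂), h₂⟩ 1 (by omega)] at hpath
    have hd := eq_of_pathVertex_one_eq (d := ⟨(u, v₁), h₁⟩) (e := ⟨(u, v₂), h₂⟩) hk rfl
      (hF (Sum.inl u) (adj_pathVertex_succ hk ⟨(u, v₁), h₁⟩ (Nat.zero_le k))
        (adj_pathVertex_succ hk ⟨(u, v₂), h₂⟩ (Nat.zero_le k)) hpath)
    exact congrArg (fun d : G.Dart => d.snd) hd

end LocallyInjective

theorem exists_graphHomLocallyInjective_iff (hk : 0 < k) (hconn : G.Connected) {v u₁ u₂ u₃ : V}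
    (h₁ : G.Adj v u₁) (h₂ : G.Adj v u₂) (h₃ : G.Adj v u₃) (h₁₂ : u₁ ≠ u₂) (h₁₃ : u₁ ≠ u₃)
    (h₂₃ : u₂ ≠ u₃) :
    (∃ f : G →g H, GraphHomLocallyInjective f) ↔
      ∃ F : Subdivision G k →g Subdivision H k, GraphHomLocallyInjective F := by
  refine ⟨fun ⟨f, hf⟩ => ⟨map f, graphHomLocallyInjective_map hf⟩, fun ⟨F, hF⟩ => ?_⟩
  obtain ⟨b, hb⟩ := exists_apply_inl_eq_inl hF hk h₁ h₂ h₃ h₁₂ h₁₃ h₂₃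
  exact exists_graphHomLocallyInjective hF hk (forall_exists_apply_inl_eq_inl hF hk hconn hb)

end Subdivision

theorem statement5_general {V : Type*} [Fintype V] (G : SimpleGraph V)
    [DecidableRel G.Adj] (r : ℕ) (hr : 1 ≤ r) (hconn : G.Connected)
    (hdeg3 : ∃ v : V, G.degree v = 3) :
    (∃ f : G →g SimpleGraph.completeGraph (Fin 4), GraphHomLocallyInjective f) ↔
      (∃ f : Subdivision G r →g Subdivision (SimpleGraph.completeGraph (Fin 4)) r,
        GraphHomLocallyInjective f) := by
  classical
  obtain ⟨v, hv⟩ := hdeg3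
  obtain ⟨u₁, u₂, u₃, h₁₂, h₁₃, h₂₃, hN⟩ := Finset.card_eq_three.mp hv
  have hadj : ∀ {u}, u ∈ G.neighborFinset v → G.Adj v u := (G.mem_neighborFinset v _).mp
  exact Subdivision.exists_graphHomLocallyInjective_iff hr hconn (hadj (by simp [hN]))
    (hadj (by simp [hN])) (hadj (by simp [hN])) h₁₂ h₁₃ h₂₃

/-- Let `r ≥ 1` and let `G` be a connected subcubic graph with at least one
vertex of degree 3.  Then there is a locally injective homomorphism from `G`
to `K₄` if and only if there is one from `G^r` to `K₄^r`. -/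
theorem statement5 {V : Type*} [Fintype V] (G : SimpleGraph V)
    [DecidableRel G.Adj] (r : ℕ) (hr : 1 ≤ r) (hconn : G.Connected)
    (hcubic : ∀ v : V, G.degree v ≤ 3) (hdeg3 : ∃ v : V, G.degree v = 3) :
    (∃ f : G →g SimpleGraph.completeGraph (Fin 4), GraphHomLocallyInjective f) ↔
      (∃ f : Subdivision G r →g Subdivision (SimpleGraph.completeGraph (Fin 4)) r,
        GraphHomLocallyInjective f) :=
  statement5_general G r hr hconn hdeg3
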